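/- arXiv:1907.04889 — 5 statements merged into one kernel-verified Lean document; each statement's English description precedes it below -/
import Mathlib

section
/- Let q ≥ 1 and let ζ be a q-cycle (with Z₂ coefficients) of the suspension SK of a simplicial complex K such that every q-simplex of ζ is a suspended simplex (i.e., of the form σ∪{ω_i} for some (q−1)-simplex σ of K and i ∈ {1,2}). Then ζ lies in the image of the suspension map S: C_{q−1}(K) → C_q(SK); equivalently, for every (q−1)-simplex σ of K, σ∪{ω₁} ∈ ζ if and only if σ∪{ω₂} ∈ ζ. -/
open Finset

variable {V : Type*} [DecidableEq V]

/-- The codimension-one faces of a simplex. -/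
def facetsOf (σ : Finset V) : Finset (Finset V) :=
  σ.powerset.filter (fun τ => τ.card + 1 = σ.card)

/-- The mod-2 (ℤ₂) boundary of a chain of simplices. -/
def bdry (C : Finset (Finset V)) : Finset (Finset V) :=
  (C.biUnion facetsOf).filter (fun τ => Odd ((C.filter (fun s => τ ∈ facetsOf s)).card))

/-- The suspension map on ℤ₂ chains. -/
def susp (ω₁ ω₂ : V) (A : Finset (Finset V)) : Finset (Finset V) :=
  A.image (insert ω₁) ∪ A.image (insert ω₂)

/-- The suspension SK of a complex K with apex vertices ω₁, ω₂. -/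
def SKset (K : Set (Finset V)) (ω₁ ω₂ : V) : Set (Finset V) :=
  {τ | τ ∈ K ∨ τ = {ω₁} ∨ τ = {ω₂} ∨ ∃ σ ∈ K, τ = insert ω₁ σ ∨ τ = insert ω₂ σ}

lemma mem_facetsOf {τ σ : Finset V} : τ ∈ facetsOf σ ↔ τ ⊆ σ ∧ τ.card + 1 = σ.card := by
  simp [facetsOf]

lemma key_half (ω₁ ω₂ : V) (hω : ω₁ ≠ ω₂) (ζ : Finset (Finset V))
    (hζ : ∀ τ ∈ ζ, ω₁ ∈ τ ∨ ω₂ ∈ τ) (hcyc : bdry ζ = ∅)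
    (σ : Finset V) (h1 : ω₁ ∉ σ) (h2 : ω₂ ∉ σ)
    (hmem : insert ω₁ σ ∈ ζ) : insert ω₂ σ ∈ ζ := by
  by_contra hne
  have hfac : σ ∈ facetsOf (insert ω₁ σ) := by
    rw [mem_facetsOf]
    exact ⟨subset_insert _ _, (card_insert_of_notMem h1).symm⟩
  have hfilter : ζ.filter (fun s => σ ∈ facetsOf s) = {insert ω₁ σ} := by
    ext s
    simp only [mem_filter, mem_singleton]
    constructor
    · rintro ⟨hs, hf⟩
      rw [mem_facetsOf] at hf
      obtain ⟨hsub, hcard⟩ := hf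
      rcases hζ s hs with h | h
      · have hss : insert ω₁ σ ⊆ s := insert_subset h hsub
        exact (eq_of_subset_of_card_le hss
          (by rw [card_insert_of_notMem h1, hcard])).symm
      · have hss : insert ω₂ σ ⊆ s := insert_subset h hsub
        have heq := eq_of_subset_of_card_le hss
          (by rw [card_insert_of_notMem h2, hcard])
        subst heq
        exact (hne hs).elim
    · rintro rfl
      exact ⟨hmem, hfac⟩
  have hmem' : σ ∈ bdry ζ := by
    rw [bdry, mem_filter]
    refine ⟨mem_biUnion.2 ⟨_, hmem, hfac⟩, ?_⟩
    rw [hfilter]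
    simp
  rw [hcyc] at hmem'
  exact absurd hmem' (notMem_empty σ)

/-- A q-cycle of SK consisting only of suspended simplices lies in the image of the
suspension map; equivalently σ∪{ω₁} ∈ ζ ↔ σ∪{ω₂} ∈ ζ for every (q−1)-simplex σ of K. -/
theorem stmt1 {q : ℕ} (hq : 1 ≤ q) (K : Set (Finset V))
    (hK : ∀ σ ∈ K, ∀ τ ⊆ σ, τ ∈ K)
    (ω₁ ω₂ : V) (hω : ω₁ ≠ ω₂)
    (hω₁ : ∀ σ ∈ K, ω₁ ∉ σ) (hω₂ : ∀ σ ∈ K, ω₂ ∉ σ)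
    (ζ : Finset (Finset V))
    (hζ : ∀ τ ∈ ζ, τ ∈ SKset K ω₁ ω₂ ∧ τ.card = q + 1 ∧ (ω₁ ∈ τ ∨ ω₂ ∈ τ))
    (hcyc : bdry ζ = ∅) :
    (∃ A : Finset (Finset V), (∀ σ ∈ A, σ ∈ K ∧ σ.card = q) ∧ ζ = susp ω₁ ω₂ A) ∧
    ∀ σ ∈ K, σ.card = q → (insert ω₁ σ ∈ ζ ↔ insert ω₂ σ ∈ ζ) := by
  have hiff : ∀ σ : Finset V, ω₁ ∉ σ → ω₂ ∉ σ →
      (insert ω₁ σ ∈ ζ ↔ insert ω₂ σ ∈ ζ) := fun σ h1 h2 =>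
    ⟨key_half ω₁ ω₂ hω ζ (fun τ ht => (hζ τ ht).2.2) hcyc σ h1 h2,
     key_half ω₂ ω₁ hω.symm ζ (fun τ ht => ((hζ τ ht).2.2).symm) hcyc σ h2 h1⟩
  have hstruct : ∀ τ ∈ ζ, ∃ σ, σ ∈ K ∧ σ.card = q ∧ ω₁ ∉ σ ∧ ω₂ ∉ σ ∧
      (τ = insert ω₁ σ ∨ τ = insert ω₂ σ) := by
    intro τ hτ
    obtain ⟨hSK, hcard, hω'⟩ := hζ τ hτ
    rcases hSK with hK' | h | h | ⟨σ, hσ, h | h⟩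
    · rcases hω' with h | h
      · exact absurd h (hω₁ τ hK')
      · exact absurd h (hω₂ τ hK')
    · subst h; simp at hcard; omega
    · subst h; simp at hcard; omega
    · refine ⟨σ, hσ, ?_, hω₁ σ hσ, hω₂ σ hσ, Or.inl h⟩
      subst h
      rw [card_insert_of_notMem (hω₁ σ hσ)] at hcard
      omega
    · refine ⟨σ, hσ, ?_, hω₁ σ hσ, hω₂ σ hσ, Or.inr h⟩
      subst h
      rw [card_insert_of_notMem (hω₂ σ hσ)] at hcard
      omega
  constructor
  · refine ⟨ζ.image (fun τ => (τ.erase ω₁).erase ω₂), ?_, ?_⟩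
    · intro σ hσ
      obtain ⟨τ, hτ, rfl⟩ := mem_image.1 hσ
      obtain ⟨σ₀, hσ₀, hcard, h1, h2, h | h⟩ := hstruct τ hτ <;> subst h
      · rw [erase_insert h1, erase_eq_of_notMem h2]
        exact ⟨hσ₀, hcard⟩
      · rw [erase_eq_of_notMem (show ω₁ ∉ insert ω₂ σ₀ by simp [hω, h1]), erase_insert h2]
        exact ⟨hσ₀, hcard⟩
    · ext τ
      simp only [susp, mem_union, mem_image]
      constructor
      · intro hτ
        obtain ⟨σ₀, hσ₀, hcard, h1, h2, h | h⟩ := hstruct τ hτ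
        · exact Or.inl ⟨σ₀, ⟨τ, hτ,
            by rw [h, erase_insert h1, erase_eq_of_notMem h2]⟩, h.symm⟩
        · exact Or.inr ⟨σ₀, ⟨τ, hτ,
            by rw [h, erase_eq_of_notMem (show ω₁ ∉ insert ω₂ σ₀ by simp [hω, h1]), erase_insert h2]⟩, h.symm⟩
      · rintro (⟨σ, ⟨τ', hτ', rfl⟩, rfl⟩ | ⟨σ, ⟨τ', hτ', rfl⟩, rfl⟩) <;>
          obtain ⟨σ₀, hσ₀, hcard, h1, h2, h | h⟩ := hstruct τ' hτ' <;> subst h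
        · rwa [erase_insert h1, erase_eq_of_notMem h2]
        · rw [erase_eq_of_notMem (show ω₁ ∉ insert ω₂ σ₀ by simp [hω, h1]), erase_insert h2]
          exact (hiff σ₀ h1 h2).2 hτ'
        · rw [erase_insert h1, erase_eq_of_notMem h2]
          exact (hiff σ₀ h1 h2).1 hτ'
        · rwa [erase_eq_of_notMem (show ω₁ ∉ insert ω₂ σ₀ by simp [hω, h1]), erase_insert h2]
  · exact fun σ hσ _ => hiff σ (hω₁ σ hσ) (hω₂ σ hσ)
end

section
/- Let q ≥ 1 and let K be a simplicial complex of top dimension q (K contains no simplex of dimension greater than q). If A is a (q+1)-chain of the suspension SK (with Z₂ coefficients) such that every q-simplex of ∂A is a suspended simplex, then A lies in the image of the suspension map S: C_q(K) → C_{q+1}(SK); i.e., for every q-simplex σ of K, σ∪{ω₁} ∈ A if and only if σ∪{ω₂} ∈ A. -/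
open Finset

variable {V : Type*} [DecidableEq V]

/-- If K has top dimension q and A is a (q+1)-chain of SK whose boundary consists only of
suspended simplices, then A lies in the image of the suspension map; i.e.
σ∪{ω₁} ∈ A ↔ σ∪{ω₂} ∈ A for every q-simplex σ of K. -/
theorem stmt2 {q : ℕ} (hq : 1 ≤ q) (K : Set (Finset V))
    (hK : ∀ σ ∈ K, ∀ τ ⊆ σ, τ ∈ K)
    (htop : ∀ σ ∈ K, σ.card ≤ q + 1)
    (ω₁ ω₂ : V) (hω : ω₁ ≠ ω₂)
    (hω₁ : ∀ σ ∈ K, ω₁ ∉ σ) (hω₂ : ∀ σ ∈ K, ω₂ ∉ σ)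
    (A : Finset (Finset V))
    (hA : ∀ τ ∈ A, τ ∈ SKset K ω₁ ω₂ ∧ τ.card = q + 2)
    (hbd : ∀ τ ∈ bdry A, τ ∈ SKset K ω₁ ω₂ ∧ (ω₁ ∈ τ ∨ ω₂ ∈ τ)) :
    (∃ A' : Finset (Finset V), (∀ σ ∈ A', σ ∈ K ∧ σ.card = q + 1) ∧ A = susp ω₁ ω₂ A') ∧
    ∀ σ ∈ K, σ.card = q + 1 → (insert ω₁ σ ∈ A ↔ insert ω₂ σ ∈ A) := by
  -- structure of elements of A
  have hstruct : ∀ τ ∈ A, ∃ σ, σ ∈ K ∧ σ.card = q + 1 ∧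
      (τ = insert ω₁ σ ∨ τ = insert ω₂ σ) := by
    intro τ hτ
    obtain ⟨hSK, hcard⟩ := hA τ hτ
    rcases hSK with h | h | h | ⟨σ, hσ, h⟩
    · have := htop τ h; omega
    · rw [h, card_singleton] at hcard; omega
    · rw [h, card_singleton] at hcard; omega
    · refine ⟨σ, hσ, ?_, h⟩
      rcases h with h | h
      · have h1 : ω₁ ∉ σ := hω₁ σ hσ
        rw [h, card_insert_of_notMem h1] at hcard; omega
      · have h2 : ω₂ ∉ σ := hω₂ σ hσ
        rw [h, card_insert_of_notMem h2] at hcard; omega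
  -- key iff
  have key : ∀ σ ∈ K, σ.card = q + 1 → (insert ω₁ σ ∈ A ↔ insert ω₂ σ ∈ A) := by
    intro σ hσ hcard
    by_contra hiff
    have hω₁σ : ω₁ ∉ σ := hω₁ σ hσ
    have hω₂σ : ω₂ ∉ σ := hω₂ σ hσ
    -- characterize which elements of A have σ as a facet
    have hfacet : ∀ s ∈ A, (σ ∈ facetsOf s ↔ s = insert ω₁ σ ∨ s = insert ω₂ σ) := by
      intro s hs
      obtain ⟨σ', hσ', hc', hs'⟩ := hstruct s hs
      constructor
      · intro hf
        simp only [facetsOf, mem_filter, mem_powerset] at hf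
        obtain ⟨hsub, hcf⟩ := hf
        rcases hs' with rfl | rfl
        · left
          have h1 : ω₁ ∉ σ' := hω₁ σ' hσ'
          have hsub' : σ ⊆ σ' := by
            intro x hx
            rcases mem_insert.mp (hsub hx) with h | h
            · exact absurd (h ▸ hx) hω₁σ
            · exact h
          have : σ = σ' := eq_of_subset_of_card_le hsub' (by omega)
          rw [this]
        · right
          have h2 : ω₂ ∉ σ' := hω₂ σ' hσ'
          have hsub' : σ ⊆ σ' := by
            intro x hx
            rcases mem_insert.mp (hsub hx) with h | h
            · exact absurd (h ▸ hx) hω₂σ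
            · exact h
          have : σ = σ' := eq_of_subset_of_card_le hsub' (by omega)
          rw [this]
      · rintro (rfl | rfl)
        · simp [facetsOf, subset_insert, card_insert_of_notMem hω₁σ]
        · simp [facetsOf, subset_insert, card_insert_of_notMem hω₂σ]
    have hne : insert ω₁ σ ≠ insert ω₂ σ := by
      intro h
      have : ω₁ ∈ insert ω₂ σ := h ▸ mem_insert_self ω₁ σ
      rcases mem_insert.mp this with h' | h'
      · exact hω h'
      · exact hω₁σ h'
    -- exactly one of the two is in A
    have hone : ∃ a, (a = insert ω₁ σ ∨ a = insert ω₂ σ) ∧ a ∈ A ∧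
        A.filter (fun s => σ ∈ facetsOf s) = {a} := by
      rcases Classical.em (insert ω₁ σ ∈ A) with h1 | h1
      · have h2 : insert ω₂ σ ∉ A := fun h2 => hiff ⟨fun _ => h2, fun _ => h1⟩
        refine ⟨insert ω₁ σ, Or.inl rfl, h1, ?_⟩
        ext x
        simp only [mem_filter, mem_singleton]
        constructor
        · rintro ⟨hx, hf⟩
          rcases (hfacet x hx).mp hf with rfl | rfl
          · rfl
          · exact absurd hx h2
        · rintro rfl
          exact ⟨h1, (hfacet _ h1).mpr (Or.inl rfl)⟩
      · have h2 : insert ω₂ σ ∈ A := by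
          by_contra h2
          exact hiff ⟨fun h => absurd h h1, fun h => absurd h h2⟩
        refine ⟨insert ω₂ σ, Or.inr rfl, h2, ?_⟩
        ext x
        simp only [mem_filter, mem_singleton]
        constructor
        · rintro ⟨hx, hf⟩
          rcases (hfacet x hx).mp hf with rfl | rfl
          · exact absurd hx h1
          · rfl
        · rintro rfl
          exact ⟨h2, (hfacet _ h2).mpr (Or.inr rfl)⟩
    obtain ⟨a, _, haA, hfilt⟩ := hone
    have hafacet : σ ∈ facetsOf a := by
      have : a ∈ A.filter (fun s => σ ∈ facetsOf s) := hfilt ▸ mem_singleton_self a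
      exact (mem_filter.mp this).2
    have hσbdry : σ ∈ bdry A := by
      simp only [bdry, mem_filter, mem_biUnion]
      exact ⟨⟨a, haA, hafacet⟩, by rw [hfilt, card_singleton]; exact odd_one⟩
    rcases (hbd σ hσbdry).2 with h | h
    · exact hω₁σ h
    · exact hω₂σ h
  refine ⟨?_, key⟩
  -- construct A'
  refine ⟨(A.filter (fun s => ω₁ ∈ s)).image (fun s => s.erase ω₁), ?_, ?_⟩
  · intro σ hσ
    simp only [mem_image, mem_filter] at hσ
    obtain ⟨s, ⟨hsA, hω₁s⟩, rfl⟩ := hσ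
    obtain ⟨σ', hσ', hc', hs'⟩ := hstruct s hsA
    have h1 : ω₁ ∉ σ' := hω₁ σ' hσ'
    rcases hs' with rfl | rfl
    · rw [erase_insert h1]
      exact ⟨hσ', hc'⟩
    · exfalso
      rcases mem_insert.mp hω₁s with h | h
      · exact hω h
      · exact h1 h
  · -- A = susp ω₁ ω₂ A'
    ext τ
    simp only [susp, mem_union, mem_image, mem_filter]
    constructor
    · intro hτ
      obtain ⟨σ, hσ, hc, hs⟩ := hstruct τ hτ
      have h1 : ω₁ ∉ σ := hω₁ σ hσ
      have hmem : insert ω₁ σ ∈ A := by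
        rcases hs with rfl | rfl
        · exact hτ
        · exact (key σ hσ hc).mpr hτ
      have hA' : σ ∈ (A.filter (fun s => ω₁ ∈ s)).image (fun s => s.erase ω₁) := by
        simp only [mem_image, mem_filter]
        exact ⟨insert ω₁ σ, ⟨hmem, mem_insert_self _ _⟩, erase_insert h1⟩
      simp only [mem_image, mem_filter] at hA'
      rcases hs with rfl | rfl
      · exact Or.inl ⟨σ, (by simpa using hA' : _), rfl⟩
      · exact Or.inr ⟨σ, (by simpa using hA' : _), rfl⟩
    · rintro (⟨σ, hσ, rfl⟩ | ⟨σ, hσ, rfl⟩)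
      · obtain ⟨s, ⟨hsA, hω₁s⟩, rfl⟩ := hσ
        obtain ⟨σ', hσ', hc', hs'⟩ := hstruct s hsA
        have h1 : ω₁ ∉ σ' := hω₁ σ' hσ'
        rcases hs' with rfl | rfl
        · simpa [erase_insert h1] using hsA
        · exact absurd (mem_insert.mp hω₁s) (by rintro (h | h); exact hω h; exact h1 h)
      · obtain ⟨s, ⟨hsA, hω₁s⟩, rfl⟩ := hσ
        obtain ⟨σ', hσ', hc', hs'⟩ := hstruct s hsA
        have h1 : ω₁ ∉ σ' := hω₁ σ' hσ'
        rcases hs' with rfl | rfl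
        · rw [erase_insert h1]
          exact (key σ' hσ' hc').mp hsA
        · exact absurd (mem_insert.mp hω₁s) (by rintro (h | h); exact hω h; exact h1 h)
end

section
/- In a filtration F of a simplicial complex, if ζ and ζ' are both d-cycles born in K_β (created by σ_β) and both become boundaries exactly in K_δ (via (d+1)-chains created by σ_δ), then ζ + ζ' is a d-cycle that exists in K_β before σ_β is added or is a boundary in K_{δ-1}; consequently, any two persistent d-cycles of the interval [β,δ) are homologous in K_{δ-1} up to a cycle born strictly before index β. -/
open Finset

variable {V : Type*} [DecidableEq V]

/-- The partial complex K_i of the filtration determined by the simplex enumeration f: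
it consists of the simplices f 1, …, f i. -/
def cplxAt (f : ℕ → Finset V) (i : ℕ) : Finset (Finset V) :=
  (Finset.Icc 1 i).image f

lemma mem_bdry {C : Finset (Finset V)} {τ : Finset V} :
    τ ∈ bdry C ↔ Odd ((C.filter (fun s => τ ∈ facetsOf s)).card) := by
  simp only [bdry, Finset.mem_filter, Finset.mem_biUnion, and_iff_right_iff_imp]
  intro h
  have hne : (C.filter (fun s => τ ∈ facetsOf s)).Nonempty := by
    rw [← Finset.card_pos]; obtain ⟨k, hk⟩ := h; omega
  obtain ⟨s, hs⟩ := hne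
  simp only [Finset.mem_filter] at hs
  exact ⟨s, hs.1, hs.2⟩

lemma filter_split {A A' : Finset (Finset V)} (p : Finset V → Prop) [DecidablePred p] :
    (A.filter p).card = ((A \ A').filter p).card + ((A ∩ A').filter p).card := by
  rw [← Finset.card_union_of_disjoint, ← Finset.filter_union, Finset.sdiff_union_inter]
  exact Finset.disjoint_filter_filter (Finset.disjoint_of_subset_right
    (Finset.inter_subset_right) Finset.sdiff_disjoint)

/-- If ζ and ζ' are d-cycles born in K_β (created by σ_β) that become boundaries in K_δ via
(d+1)-chains A, A' created by σ_δ, then ζ + ζ' = ∂(A + A') where the chain A + A' lies in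
K_{δ-1}; consequently ζ + ζ' is a boundary in K_{δ-1}, i.e. any two persistent d-cycles of
the interval [β,δ) are homologous in K_{δ-1}. -/
theorem stmt9 {d n β δ : ℕ} (f : ℕ → Finset V) (hinj : Function.Injective f)
    (hβ1 : 1 ≤ β) (hβδ : β < δ) (hδn : δ ≤ n)
    (hfδ : (f δ).card = d + 2)
    (ζ ζ' A A' : Finset (Finset V))
    (hζβ : f β ∈ ζ) (hζ'β : f β ∈ ζ')
    (hζK : ∀ τ ∈ ζ, τ ∈ cplxAt f β) (hζ'K : ∀ τ ∈ ζ', τ ∈ cplxAt f β)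
    (hA : ∀ τ ∈ A, τ ∈ cplxAt f δ ∧ τ.card = d + 2)
    (hA' : ∀ τ ∈ A', τ ∈ cplxAt f δ ∧ τ.card = d + 2)
    (hAδ : f δ ∈ A) (hA'δ : f δ ∈ A')
    (hz : ζ = bdry A) (hz' : ζ' = bdry A') :
    (ζ \ ζ') ∪ (ζ' \ ζ) = bdry ((A \ A') ∪ (A' \ A)) ∧
    (∀ τ ∈ (A \ A') ∪ (A' \ A), τ ∈ cplxAt f (δ - 1) ∧ τ.card = d + 2) ∧
    ∃ B : Finset (Finset V), (∀ τ ∈ B, τ ∈ cplxAt f (δ - 1) ∧ τ.card = d + 2) ∧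
      (ζ \ ζ') ∪ (ζ' \ ζ) = bdry B := by
  have key : (ζ \ ζ') ∪ (ζ' \ ζ) = bdry ((A \ A') ∪ (A' \ A)) := by
    ext τ
    have hdisj : Disjoint (A \ A') (A' \ A) := disjoint_sdiff_sdiff
    have hcard : (((A \ A') ∪ (A' \ A)).filter (fun s => τ ∈ facetsOf s)).card
        = ((A \ A').filter (fun s => τ ∈ facetsOf s)).card
          + ((A' \ A).filter (fun s => τ ∈ facetsOf s)).card := by
      rw [Finset.filter_union, Finset.card_union_of_disjoint]
      exact Finset.disjoint_filter_filter hdisj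
    have h1 := filter_split (A := A) (A' := A') (fun s => τ ∈ facetsOf s)
    have h2 := filter_split (A := A') (A' := A) (fun s => τ ∈ facetsOf s)
    rw [Finset.inter_comm] at h2
    simp only [Finset.mem_union, Finset.mem_sdiff, hz, hz', mem_bdry, hcard, Nat.odd_iff] at *
    omega
  refine ⟨key, ?_, ?_⟩
  · intro τ hτ
    have hmem : τ ∈ cplxAt f δ ∧ τ.card = d + 2 := by
      rcases Finset.mem_union.1 hτ with h | h
      · exact hA τ (Finset.mem_sdiff.1 h).1
      · exact hA' τ (Finset.mem_sdiff.1 h).1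
    have hne : τ ≠ f δ := by
      rintro rfl
      rcases Finset.mem_union.1 hτ with h | h
      · exact (Finset.mem_sdiff.1 h).2 hA'δ
      · exact (Finset.mem_sdiff.1 h).2 hAδ
    obtain ⟨⟨i, hi, rfl⟩, hc⟩ := by
      simpa [cplxAt, Finset.mem_image] using hmem
    refine ⟨?_, hc⟩
    simp only [cplxAt, Finset.mem_image]
    refine ⟨i, ?_, rfl⟩
    simp only [Finset.mem_Icc] at hi ⊢
    have : i ≠ δ := fun h => hne (by rw [h])
    omega
  · exact ⟨(A \ A') ∪ (A' \ A), by
      intro τ hτ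
      have hmem : τ ∈ cplxAt f δ ∧ τ.card = d + 2 := by
        rcases Finset.mem_union.1 hτ with h | h
        · exact hA τ (Finset.mem_sdiff.1 h).1
        · exact hA' τ (Finset.mem_sdiff.1 h).1
      have hne : τ ≠ f δ := by
        rintro rfl
        rcases Finset.mem_union.1 hτ with h | h
        · exact (Finset.mem_sdiff.1 h).2 hA'δ
        · exact (Finset.mem_sdiff.1 h).2 hAδ
      obtain ⟨⟨i, hi, rfl⟩, hc⟩ := by
        simpa [cplxAt, Finset.mem_image] using hmem
      refine ⟨?_, hc⟩
      simp only [cplxAt, Finset.mem_image]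
      refine ⟨i, ?_, rfl⟩
      simp only [Finset.mem_Icc] at hi ⊢
      have : i ≠ δ := fun h => hne (by rw [h])
      omega, key⟩
end

section
/- Let K be a simplicial complex and let the 'Prune' operation iteratively delete any d-simplex σ that has a (d−1)-face whose only d-coface is σ, until no such simplex exists. Then Prune never deletes a d-simplex that belongs to some Z₂ d-cycle of K; in particular, every Z₂ d-cycle of K is contained in the pruned complex. -/
open Finset

variable {V : Type*} [DecidableEq V]

/-- The Prune invariant: a dangled d-simplex σ — one having a (d−1)-face τ whose only
d-coface in the current complex K is σ — lies in no ℤ₂ d-cycle of K; in particular every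
ℤ₂ d-cycle of K is contained in K with σ removed, so pruning leaves all d-cycles intact. -/
theorem stmt12 {d : ℕ} (K : Finset (Finset V))
    (hK : ∀ σ ∈ K, ∀ τ ⊆ σ, τ ∈ K)
    (σ : Finset V) (hσ : σ ∈ K) (hcard : σ.card = d + 1)
    (hdangle : ∃ τ ⊆ σ, τ.card = d ∧ K.filter (fun s => s.card = d + 1 ∧ τ ⊆ s) = {σ}) :
    ∀ ζ : Finset (Finset V), (∀ s ∈ ζ, s ∈ K ∧ s.card = d + 1) → bdry ζ = ∅ →
      σ ∉ ζ ∧ ∀ s ∈ ζ, s ∈ K.erase σ := by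
  intro ζ hζ hcyc
  obtain ⟨τ, hτσ, hτd, hfilt⟩ := hdangle
  have hτfac : τ ∈ facetsOf σ := by
    simp [facetsOf, hτσ, hτd, hcard]
  have hσnot : σ ∉ ζ := by
    intro hσζ
    -- the only s in ζ with τ ∈ facetsOf s is σ
    have hfζ : ζ.filter (fun s => τ ∈ facetsOf s) = {σ} := by
      ext s
      simp only [mem_filter, mem_singleton]
      constructor
      · rintro ⟨hsζ, hsfac⟩
        obtain ⟨hsK, hsd⟩ := hζ s hsζ
        have hτs : τ ⊆ s ∧ τ.card + 1 = s.card := by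
          simpa [facetsOf] using hsfac
        have : s ∈ K.filter (fun s => s.card = d + 1 ∧ τ ⊆ s) := by
          simp [hsK, hsd, hτs.1]
        rw [hfilt] at this
        simpa using this
      · rintro rfl
        exact ⟨hσζ, hτfac⟩
    have hτbd : τ ∈ bdry ζ := by
      simp only [bdry, mem_filter, mem_biUnion]
      exact ⟨⟨σ, hσζ, hτfac⟩, by rw [hfζ]; simp⟩
    rw [hcyc] at hτbd
    exact absurd hτbd (notMem_empty τ)
  refine ⟨hσnot, fun s hsζ => ?_⟩
  exact mem_erase.mpr ⟨fun h => hσnot (h ▸ hsζ), (hζ s hsζ).1⟩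
end

section
/- Let K be a d-weighted weak (d+1)-pseudomanifold embedded in ℝ^{d+1}, and consider the cellular structure R^{d+1} = K̃ ∪ {voids of ℝ^{d+1} \ |K̃|} where K̃ is the d-connected subcomplex used in the infinite-interval algorithm plus its admissible (d+1)-simplices. For any partition (S,T) of the dual graph vertices (dual to (d+1)-cells, i.e., (d+1)-simplices and voids), the d-chain dual to the edges across (S,T) equals Σ_{α ∈ θ^{-1}(S)} ∂(α) with Z₂ coefficients, and in particular is a Z₂ d-cycle. -/
open Finset

variable {V : Type*} [DecidableEq V]

lemma even_sum_iff_even_card_odd {ι : Type*} [DecidableEq ι] (s : Finset ι) (f : ι → ℕ) :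
    Even (∑ i ∈ s, f i) ↔ Even ((s.filter (fun i => Odd (f i))).card) := by
  classical
  induction s using Finset.induction with
  | empty => simp
  | @insert a s h ih =>
    rw [Finset.sum_insert h, Finset.filter_insert]
    by_cases ho : Odd (f a)
    · rw [if_pos ho, Finset.card_insert_of_notMem (by simp [h]), Nat.even_add,
        Nat.even_add_one]
      simp [ih, Nat.not_even_iff_odd.mpr ho]
    · rw [if_neg ho, Nat.even_add]
      simp [ih, Nat.not_odd_iff_even.mp ho]

/-- The cellular structure R^{d+1} on ℝ^{d+1} induced by a weak (d+1)-pseudomanifold K̃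
embedded in ℝ^{d+1}: its (d+1)-cells (a finite type C) are the (d+1)-simplices of K̃ together
with the voids of ℝ^{d+1} \ |K̃|; each cell α has a ℤ₂ boundary d-chain `bd α` (for a void,
its boundary with orientations forgotten), each `bd α` is a ℤ₂ d-cycle, and every d-simplex
of K̃ lies on the boundary of exactly the two (d+1)-cells on its two sides.  Then for any
partition (S,T) of the dual graph vertices (the cells), the d-chain dual to the edges across
(S,T) — the d-simplices lying on the boundary of exactly one cell of S — equals the ℤ₂ sum
Σ_{α ∈ S} ∂α, and in particular is a ℤ₂ d-cycle. -/
theorem stmt17 {C : Type*} [Fintype C] [DecidableEq C] {d : ℕ}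
    (Dsimp : Finset (Finset V)) (hD : ∀ σ ∈ Dsimp, σ.card = d + 1)
    (bd : C → Finset (Finset V))
    (hbd : ∀ α : C, ∀ σ ∈ bd α, σ ∈ Dsimp)
    (hcycle : ∀ α : C, bdry (bd α) = ∅)
    (htwo : ∀ σ ∈ Dsimp, (Finset.univ.filter (fun α : C => σ ∈ bd α)).card = 2)
    (S : Finset C) :
    Dsimp.filter (fun σ => (S.filter (fun α => σ ∈ bd α)).card = 1) =
      Dsimp.filter (fun σ => Odd ((S.filter (fun α => σ ∈ bd α)).card)) ∧
    bdry (Dsimp.filter (fun σ => (S.filter (fun α => σ ∈ bd α)).card = 1)) = ∅ := by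
  classical
  have hle : ∀ σ ∈ Dsimp, (S.filter (fun α => σ ∈ bd α)).card ≤ 2 := by
    intro σ hσ
    calc (S.filter (fun α => σ ∈ bd α)).card
        ≤ (Finset.univ.filter (fun α : C => σ ∈ bd α)).card :=
          Finset.card_le_card (Finset.filter_subset_filter _ (Finset.subset_univ S))
      _ = 2 := htwo σ hσ
  have heq : Dsimp.filter (fun σ => (S.filter (fun α => σ ∈ bd α)).card = 1) =
      Dsimp.filter (fun σ => Odd ((S.filter (fun α => σ ∈ bd α)).card)) := by
    apply Finset.filter_congr
    intro σ hσ
    constructor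
    · intro h; rw [h]; exact odd_one
    · intro h
      have h2 := hle σ hσ
      rcases h with ⟨k, hk⟩
      omega
  refine ⟨heq, ?_⟩
  rw [heq]
  rw [Finset.eq_empty_iff_forall_notMem]
  intro τ hτ
  rw [bdry, Finset.mem_filter] at hτ
  apply Nat.not_odd_iff_even.mpr _ hτ.2
  have hfil : (Dsimp.filter (fun σ => Odd ((S.filter (fun α => σ ∈ bd α)).card))).filter
      (fun s => τ ∈ facetsOf s)
      = ((Dsimp.filter (fun s => τ ∈ facetsOf s)).filter
          (fun σ => Odd ((S.filter (fun α => σ ∈ bd α)).card))) := by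
    ext σ; simp [Finset.mem_filter]; tauto
  rw [hfil, ← even_sum_iff_even_card_odd]
  have hsum : ∑ σ ∈ Dsimp.filter (fun s => τ ∈ facetsOf s), (S.filter (fun α => σ ∈ bd α)).card
      = ∑ α ∈ S, ((bd α).filter (fun s => τ ∈ facetsOf s)).card := by
    simp only [Finset.card_filter]
    rw [Finset.sum_comm]
    apply Finset.sum_congr rfl
    intro α _
    rw [← Finset.card_filter, ← Finset.card_filter]
    congr 1
    ext a
    simp only [Finset.mem_filter]
    exact ⟨fun h => ⟨h.2, h.1.2⟩, fun h => ⟨⟨hbd α a h.1, h.2⟩, h.1⟩⟩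
  rw [hsum]
  apply Finset.even_sum
  intro α _
  by_contra hodd
  rw [Nat.not_even_iff_odd] at hodd
  have hne : ((bd α).filter (fun s => τ ∈ facetsOf s)).Nonempty := by
    rw [← Finset.card_pos]
    rcases hodd with ⟨k, hk⟩; omega
  obtain ⟨σ, hσ⟩ := hne
  rw [Finset.mem_filter] at hσ
  have : τ ∈ bdry (bd α) := by
    rw [bdry, Finset.mem_filter]
    exact ⟨Finset.mem_biUnion.mpr ⟨σ, hσ.1, hσ.2⟩, hodd⟩
  rw [hcycle α] at this
  exact absurd this (Finset.notMem_empty τ)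
end
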